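/- Let G be a biconnected planar graph that is neither 3-connected nor a cycle. Then G has a 3-connected separating pair, i.e., a separating pair {a,b} such that there are at least three internally vertex-disjoint paths between a and b. -/

import Mathlib

open SimpleGraph

variable {V : Type*}

/-- `{a,b}` is a separating pair: removing both `a` and `b` disconnects the graph. -/
def SepPair (G : SimpleGraph V) (a b : V) : Prop :=
  a ≠ b ∧ ¬ (G.induce {v : V | v ≠ a ∧ v ≠ b}).Connected

/-- Two walks from `a` to `b` are internally vertex-disjoint. -/
def InternallyDisjoint (G : SimpleGraph V) {a b : V} (p q : G.Walk a b) : Prop :=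
  ∀ v : V, v ∈ p.support → v ∈ q.support → v = a ∨ v = b

/-- The pair `(a,b)` is 3-connected: there are at least three pairwise internally
vertex-disjoint paths between `a` and `b`. -/
def ThreeConnPair (G : SimpleGraph V) (a b : V) : Prop :=
  ∃ p q r : G.Path a b, InternallyDisjoint G p.1 q.1 ∧ InternallyDisjoint G p.1 r.1 ∧
    InternallyDisjoint G q.1 r.1

/-- `G` is biconnected: connected, at least 3 vertices, no articulation point. -/
def Biconnected (G : SimpleGraph V) : Prop :=
  G.Connected ∧ 3 ≤ Nat.card V ∧ ∀ v : V, (G.induce {u : V | u ≠ v}).Connected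

/-- `G` is 3-connected: at least 4 vertices and removing any at most 2 vertices
leaves it connected. -/
def ThreeConnectedGraph (G : SimpleGraph V) : Prop :=
  4 ≤ Nat.card V ∧ ∀ s : Set V, s.ncard ≤ 2 → (G.induce sᶜ).Connected

/-- Reversal of darts, as a permutation. -/
def dartRev (G : SimpleGraph V) : Equiv.Perm G.Dart :=
  ⟨SimpleGraph.Dart.symm, SimpleGraph.Dart.symm,
    fun d => SimpleGraph.Dart.symm_symm d, fun d => SimpleGraph.Dart.symm_symm d⟩

/-- A rotation scheme: a permutation of the darts fixing the tail of each dart and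
acting as a single rotation on the darts out of each vertex. -/
def RotationScheme (G : SimpleGraph V) (σ : Equiv.Perm G.Dart) : Prop :=
  (∀ d : G.Dart, (σ d).toProd.1 = d.toProd.1) ∧
    ∀ d e : G.Dart, d.toProd.1 = e.toProd.1 → ∃ n : ℕ, (σ ^ n) d = e

/-- The face-tracing permutation of a rotation scheme. -/
def facePerm (G : SimpleGraph V) (σ : Equiv.Perm G.Dart) : Equiv.Perm G.Dart :=
  (dartRev G).trans σ

/-- The faces of the combinatorial embedding, as a setoid on darts. -/
def faceSetoid (G : SimpleGraph V) (σ : Equiv.Perm G.Dart) : Setoid G.Dart :=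
  ⟨(facePerm G σ).SameCycle,
    ⟨fun x => Equiv.Perm.SameCycle.refl _ x, Equiv.Perm.SameCycle.symm,
      Equiv.Perm.SameCycle.trans⟩⟩

/-- The number of faces of the embedding given by the rotation scheme `σ`. -/
noncomputable def faceCount (G : SimpleGraph V) (σ : Equiv.Perm G.Dart) : ℕ :=
  Nat.card (Quotient (faceSetoid G σ))

/-- `σ` is a planar embedding of `G`: a rotation scheme satisfying Euler's formula. -/
def IsPlanarEmbedding (G : SimpleGraph V) (σ : Equiv.Perm G.Dart) : Prop :=
  RotationScheme G σ ∧
    (Nat.card V : ℤ) - (Nat.card G.edgeSet : ℤ) + (faceCount G σ : ℤ) = 2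

/-- `G` is planar: it admits a planar (combinatorial) embedding. -/
def HasPlanarEmbedding (G : SimpleGraph V) : Prop :=
  ∃ σ : Equiv.Perm G.Dart, IsPlanarEmbedding G σ

/-- A face of the embedding: an orbit of the face-tracing permutation. -/
def IsFace (G : SimpleGraph V) (σ : Equiv.Perm G.Dart) (f : Set G.Dart) : Prop :=
  ∃ d : G.Dart, f = {e : G.Dart | (facePerm G σ).SameCycle d e}

/-- Vertex `v` lies on the boundary of the face `f`. -/
def OnFace {G : SimpleGraph V} (f : Set G.Dart) (v : V) : Prop :=
  ∃ d ∈ f, d.toProd.1 = v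

/-!
Suppose no separating pair carries three internally disjoint paths. An edge `ab` taken three
times counts as three such paths, and every component of `G - {a, b}` carries an `a`–`b` path; so
for a separating pair `{a, b}` the vertices `a`, `b` are non-adjacent and `G - {a, b}` has exactly
two components. By strong induction on its size, each component `C` is the interior of an
`a`–`b` path. If no `c ∈ C` separates `a` from `b` inside `C ∪ {a, b}`, Menger's theorem for two
paths gives two internally disjoint `a`–`b` paths through `C`, and a third one runs through
another component. Otherwise the part of `C` on the side of `a` is a single, smaller, component
for the separating pair `{a, c}`, and likewise on the side of `b`. Hence every vertex has degree
two.
-/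

namespace SimpleGraph

variable {G : SimpleGraph V} {s : Set V} {a b u v x y z : V}

def ReachIn (G : SimpleGraph V) (s : Set V) (x y : V) : Prop :=
  ∃ w : G.Walk x y, ∀ v ∈ w.support, v ∈ s

def compOf (G : SimpleGraph V) (s : Set V) (x : V) : Set V :=
  {y | G.ReachIn s x y}

namespace ReachIn

lemma refl (hx : x ∈ s) : G.ReachIn s x x :=
  ⟨.nil, by simpa using hx⟩

lemma left_mem : G.ReachIn s x y → x ∈ s
  | ⟨w, hw⟩ => hw x w.start_mem_support

lemma right_mem : G.ReachIn s x y → y ∈ s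
  | ⟨w, hw⟩ => hw y w.end_mem_support

lemma symm : G.ReachIn s x y → G.ReachIn s y x
  | ⟨w, hw⟩ => ⟨w.reverse, by simpa using hw⟩

lemma trans : G.ReachIn s x y → G.ReachIn s y z → G.ReachIn s x z
  | ⟨w, hw⟩, ⟨w', hw'⟩ => ⟨w.append w', by
      intro v hv
      rcases (Walk.mem_support_append_iff _ _).mp hv with hv | hv
      exacts [hw v hv, hw' v hv]⟩

lemma adj (h : G.ReachIn s x y) (hyz : G.Adj y z) (hz : z ∈ s) : G.ReachIn s x z :=
  h.trans ⟨hyz.toWalk, by simp [h.right_mem, hz]⟩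

lemma mem_of_closed {P : Set V} (hP : ∀ u ∈ P, ∀ v ∈ s, G.Adj u v → v ∈ P) (hx : x ∈ P) :
    G.ReachIn s x y → y ∈ P := by
  rintro ⟨w, hw⟩
  induction w with
  | nil => exact hx
  | cons h p ih => exact ih (hP _ hx _ (hw _ (by simp)) h) fun v hv => hw v (by simp [hv])

end ReachIn

lemma reachIn_iff_reachable (hx : x ∈ s) (hy : y ∈ s) :
    G.ReachIn s x y ↔ (G.induce s).Reachable ⟨x, hx⟩ ⟨y, hy⟩ := by
  refine ⟨fun ⟨w, hw⟩ => ⟨w.induce s hw⟩, fun ⟨w⟩ => ?_⟩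
  refine ⟨w.map (Embedding.induce s).toHom, ?_⟩
  change ∀ v ∈ (w.map (Embedding.induce s).toHom).support, v ∈ s
  simp only [Walk.support_map, List.mem_map]
  rintro _ ⟨v, -, rfl⟩
  exact v.2

lemma connected_induce_iff_reachIn :
    (G.induce s).Connected ↔ s.Nonempty ∧ ∀ x ∈ s, ∀ y ∈ s, G.ReachIn s x y := by
  refine ⟨fun h => ⟨?_, fun x hx y hy => (reachIn_iff_reachable hx hy).2 (h.preconnected _ _)⟩,
    fun ⟨⟨x, hx⟩, h⟩ => ?_⟩
  · obtain ⟨⟨x, hx⟩⟩ := h.nonempty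
    exact ⟨x, hx⟩
  · have : Nonempty s := ⟨⟨x, hx⟩⟩
    exact ⟨fun ⟨x, hx⟩ ⟨y, hy⟩ => (reachIn_iff_reachable hx hy).1 (h x hx y hy)⟩

lemma mem_compOf_self (hx : x ∈ s) : x ∈ G.compOf s x :=
  ReachIn.refl hx

lemma compOf_subset_of_closed {P : Set V} (hP : ∀ u ∈ P, ∀ v ∈ s, G.Adj u v → v ∈ P)
    (hx : x ∈ P) : G.compOf s x ⊆ P :=
  fun _ => ReachIn.mem_of_closed hP hx

lemma disjoint_compOf (h : ¬G.ReachIn s x y) : Disjoint (G.compOf s x) (G.compOf s y) :=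
  Set.disjoint_left.mpr fun _ hx hy => h (hx.trans hy.symm)

lemma reachIn_of_forall_reachIn_or (h : ∀ v ∈ s, G.ReachIn s v a ∨ G.ReachIn s v b)
    (hab : a ∈ s → b ∈ s → G.ReachIn s a b) : ∀ x ∈ s, ∀ y ∈ s, G.ReachIn s x y := by
  intro x hx y hy
  rcases h x hx with hxa | hxb <;> rcases h y hy with hya | hyb
  · exact hxa.trans hya.symm
  · exact hxa.trans ((hab hxa.right_mem hyb.right_mem).trans hyb.symm)
  · exact hxb.trans ((hab hya.right_mem hxb.right_mem).symm.trans hya.symm)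
  · exact hxb.trans hyb.symm

lemma Walk.exists_prefix_to_first_mem {T : Set V} (w : G.Walk u v) (hv : v ∈ T) :
    ∃ y ∈ T, ∃ q : G.Walk u y,
      (∀ z ∈ q.support, z ∈ w.support) ∧ ∀ z ∈ q.support, z ∈ T → z = y := by
  classical
  induction w with
  | nil => exact ⟨_, hv, .nil, by simp, by simp⟩
  | @cons u _ _ h p ih =>
    by_cases hu : u ∈ T
    · exact ⟨u, hu, .nil, by simp, by simp⟩
    obtain ⟨y, hy, q, hqp, hqT⟩ := ih hv
    refine ⟨y, hy, .cons h q, fun z hz => ?_, fun z hz hzT => ?_⟩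
    · rw [Walk.support_cons, List.mem_cons] at hz
      rcases hz with rfl | hz
      exacts [by simp, by simp [hqp z hz]]
    · rw [Walk.support_cons, List.mem_cons] at hz
      rcases hz with rfl | hz
      exacts [absurd hzT hu, hqT z hz hzT]

lemma Walk.IsPath.start_notMem_dropUntil [DecidableEq V] {p : G.Walk u v} (hp : p.IsPath)
    (hw : x ∈ p.support) (hxu : x ≠ u) : u ∉ (p.dropUntil x hw).support := by
  intro hu
  have hnd := hp.support_nodup
  rw [← p.take_spec hw, Walk.support_append] at hnd
  rw [← Walk.cons_tail_support] at hu
  exact List.disjoint_of_nodup_append hnd (p.takeUntil x hw).start_mem_support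
    ((List.mem_cons.mp hu).resolve_left (Ne.symm hxu))

lemma degree_eq_ncard_neighborSet [Fintype V] [DecidableRel G.Adj] (v : V) :
    G.degree v = (G.neighborSet v).ncard := by
  rw [Set.ncard_eq_toFinset_card']
  rfl

end SimpleGraph

open SimpleGraph

variable {G : SimpleGraph V} {a b c u v w x y z : V}

lemma InternallyDisjoint.symm {p q : G.Walk a b} (h : InternallyDisjoint G p q) :
    InternallyDisjoint G q p :=
  fun v hq hp => h v hp hq

lemma internallyDisjoint_of_disjoint {P Q : Set V} (hPQ : Disjoint P Q) {p q : G.Walk a b}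
    (hp : ∀ v ∈ p.support, v ∈ P ∪ {a, b}) (hq : ∀ v ∈ q.support, v ∈ Q ∪ {a, b}) :
    InternallyDisjoint G p q := by
  intro v hvp hvq
  rcases hp v hvp with hvP | hv
  · rcases hq v hvq with hvQ | hv
    · exact absurd hvQ (Set.disjoint_left.mp hPQ hvP)
    · simpa using hv
  · simpa using hv

/-- The three paths need not be distinct: the edge `ab`, taken three times, has no inner vertex. -/
lemma threeConnPair_of_adj (h : G.Adj a b) : ThreeConnPair G a b := by
  have hp : h.toWalk.IsPath := by simp [Walk.isPath_def, h.ne]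
  refine ⟨⟨_, hp⟩, ⟨_, hp⟩, ⟨_, hp⟩, ?_, ?_, ?_⟩ <;>
    exact fun v hv _ => by simpa using hv

lemma InternallyDisjoint.exists_paths [DecidableEq V] {S : Set V} {p q : G.Walk a b}
    (h : InternallyDisjoint G p q) (hp : ∀ v ∈ p.support, v ∈ S)
    (hq : ∀ v ∈ q.support, v ∈ S) :
    ∃ p' q' : G.Path a b, (∀ v ∈ p'.1.support, v ∈ S) ∧ (∀ v ∈ q'.1.support, v ∈ S) ∧
      InternallyDisjoint G p'.1 q'.1 :=
  ⟨p.toPath, q.toPath, fun v hv => hp v (p.support_toPath_subset_support hv),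
    fun v hv => hq v (q.support_toPath_subset_support hv),
    fun v hvp hvq => h v (p.support_toPath_subset_support hvp)
      (q.support_toPath_subset_support hvq)⟩

lemma internallyDisjoint_append_dropUntil [DecidableEq V] {P₁ P₂ : G.Walk x a}
    (hP₁ : P₁.IsPath) (h₁₂ : InternallyDisjoint G P₁ P₂) (hux : G.Adj u x) (Q : G.Walk u y)
    (hy : y ∈ P₁.support) (hyx : y ≠ x) (hQ : ∀ v ∈ Q.support, v ∈ P₂.support → v = y) :
    InternallyDisjoint G (Q.append (P₁.dropUntil y hy)) (.cons hux P₂) := by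
  intro v hv₁ hv₂
  rw [Walk.support_cons, List.mem_cons] at hv₂
  rcases hv₂ with rfl | hv₂
  · exact Or.inl rfl
  rcases (Walk.mem_support_append_iff _ _).mp hv₁ with hvQ | hvP
  · obtain rfl := hQ v hvQ hv₂
    exact Or.inr ((h₁₂ v hy hv₂).resolve_left hyx)
  · refine Or.inr ((h₁₂ v (P₁.support_dropUntil_subset_support hy hvP) hv₂).resolve_left ?_)
    rintro rfl
    exact hP₁.start_notMem_dropUntil hy hyx hvP

lemma exists_internallyDisjoint_paths_of_cons [DecidableEq V] {S : Set V} {P₁ : G.Path x a}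
    {P₂ : G.Walk x a} (h₁₂ : InternallyDisjoint G P₁.1 P₂) (hP₁ : ∀ v ∈ P₁.1.support, v ∈ S)
    (hP₂ : ∀ v ∈ P₂.support, v ∈ S) (hux : G.Adj u x) (hu : u ∈ S) {Q : G.Walk u y}
    (hQS : ∀ v ∈ Q.support, v ∈ S) (hy : y ∈ P₁.1.support) (hyx : y ≠ x)
    (hQ : ∀ v ∈ Q.support, v ∈ P₂.support → v = y) :
    ∃ p q : G.Path u a, (∀ v ∈ p.1.support, v ∈ S) ∧ (∀ v ∈ q.1.support, v ∈ S) ∧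
      InternallyDisjoint G p.1 q.1 := by
  refine (internallyDisjoint_append_dropUntil P₁.2 h₁₂ hux Q hy hyx hQ).exists_paths
    (fun v hv => ?_) (fun v hv => ?_)
  · rcases (Walk.mem_support_append_iff _ _).mp hv with hv | hv
    exacts [hQS v hv, hP₁ v (P₁.1.support_dropUntil_subset_support hy hv)]
  · rw [Walk.support_cons, List.mem_cons] at hv
    rcases hv with rfl | hv
    exacts [hu, hP₂ v hv]

/-- Menger's theorem for two paths, by induction along a walk from `u` to `a`: two disjoint
paths from the next vertex `x` are rerouted to `u` through a walk from `u` avoiding `x`, cut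
where it first meets them. -/
lemma exists_internallyDisjoint_paths {S : Set V}
    (hS : ∀ c, ∀ x ∈ S \ {c}, ∀ y ∈ S \ {c}, G.ReachIn (S \ {c}) x y) (h : G.ReachIn S u a) :
    ∃ p q : G.Path u a, (∀ v ∈ p.1.support, v ∈ S) ∧ (∀ v ∈ q.1.support, v ∈ S) ∧
      InternallyDisjoint G p.1 q.1 := by
  classical
  obtain ⟨w, hw⟩ := h
  induction w with
  | nil => exact ⟨.nil, .nil, by simpa using hw, by simpa using hw, fun v hv _ => by simp_all⟩
  | @cons u x a hux p ih =>
    have hu : u ∈ S := hw u (by simp)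
    obtain ⟨P₁, P₂, hP₁, hP₂, h₁₂⟩ := ih fun v hv => hw v (by simp [hv])
    have ha : a ∈ S := hP₁ a P₁.1.end_mem_support
    by_cases hxa : x = a
    · subst hxa
      exact InternallyDisjoint.exists_paths (p := hux.toWalk) (q := hux.toWalk)
        (fun v hv _ => by simpa using hv) (by simp [hu, ha]) (by simp [hu, ha])
    obtain ⟨Q, hQ⟩ := hS x u ⟨hu, hux.ne⟩ a ⟨ha, fun h => hxa h.symm⟩
    obtain ⟨y, hyT, Q', hQ'Q, hQ'T⟩ := Q.exists_prefix_to_first_mem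
      (T := {v | v ∈ P₁.1.support ∨ v ∈ P₂.1.support}) (Or.inl P₁.1.end_mem_support)
    have hQ'S : ∀ v ∈ Q'.support, v ∈ S \ {x} := fun v hv => hQ v (hQ'Q v hv)
    have hyx : y ≠ x := (hQ'S y Q'.end_mem_support).2
    rcases hyT with hy | hy
    · exact exists_internallyDisjoint_paths_of_cons h₁₂ hP₁ hP₂ hux hu
        (fun v hv => (hQ'S v hv).1) hy hyx fun v hv hv₂ => hQ'T v hv (Or.inr hv₂)
    · obtain ⟨p, q, hp, hq, hpq⟩ := exists_internallyDisjoint_paths_of_cons h₁₂.symm hP₂ hP₁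
        hux hu (fun v hv => (hQ'S v hv).1) hy hyx fun v hv hv₁ => hQ'T v hv (Or.inl hv₁)
      exact ⟨q, p, hq, hp, hpq.symm⟩

def NoCutVertex (G : SimpleGraph V) : Prop :=
  ∀ c : V, (G.induce {u | u ≠ c}).Connected

lemma NoCutVertex.reachIn (hG : NoCutVertex G) (hx : x ≠ c) (hy : y ≠ c) :
    G.ReachIn {u | u ≠ c} x y :=
  (connected_induce_iff_reachIn.mp (hG c)).2 x hx y hy

lemma setOf_ne_and_ne_comm : {v : V | v ≠ b ∧ v ≠ a} = {v | v ≠ a ∧ v ≠ b} :=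
  Set.ext fun _ => and_comm

lemma SepPair.exists_not_reachIn (h : SepPair G a b) (hx : x ∈ {v | v ≠ a ∧ v ≠ b}) :
    ∃ y ∈ {v | v ≠ a ∧ v ≠ b}, ¬G.ReachIn {v | v ≠ a ∧ v ≠ b} x y := by
  by_contra! hall
  exact h.2 (connected_induce_iff_reachIn.mpr
    ⟨⟨x, hx⟩, fun u hu w hw => (hall u hu).symm.trans (hall w hw)⟩)

lemma sepPair_of_not_reachIn (hab : a ≠ b) (hx : x ∈ {v | v ≠ a ∧ v ≠ b})
    (hy : y ∈ {v | v ≠ a ∧ v ≠ b}) (h : ¬G.ReachIn {v | v ≠ a ∧ v ≠ b} x y) : SepPair G a b :=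
  ⟨hab, fun hc => h ((connected_induce_iff_reachIn.mp hc).2 x hx y hy)⟩

lemma neighborSet_subset_compOf_union (hu : u ∈ G.compOf {v | v ≠ a ∧ v ≠ b} x) :
    G.neighborSet u ⊆ G.compOf {v | v ≠ a ∧ v ≠ b} x ∪ {a, b} := by
  intro w huw
  by_cases hw : w ≠ a ∧ w ≠ b
  · exact Or.inl (hu.adj huw hw)
  · rw [not_and_or, not_not, not_not] at hw
    exact Or.inr hw

lemma exists_adj_compOf (hG : NoCutVertex G) (hab : a ≠ b) (hx : x ∈ {v | v ≠ a ∧ v ≠ b}) :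
    ∃ u ∈ G.compOf {v | v ≠ a ∧ v ≠ b} x, G.Adj a u := by
  by_contra! h
  have hclosed : ∀ u ∈ G.compOf {v | v ≠ a ∧ v ≠ b} x, ∀ w ∈ {v | v ≠ b}, G.Adj u w →
      w ∈ G.compOf {v | v ≠ a ∧ v ≠ b} x := by
    intro u hu w hw huw
    refine hu.adj huw ⟨?_, hw⟩
    rintro rfl
    exact h u hu huw.symm
  exact ((hG.reachIn hx.2 hab).mem_of_closed hclosed (mem_compOf_self hx)).right_mem.1 rfl

lemma exists_path_through_compOf (hG : NoCutVertex G) (hab : a ≠ b)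
    (hx : x ∈ {v | v ≠ a ∧ v ≠ b}) :
    ∃ p : G.Path a b, ∀ v ∈ p.1.support, v ∈ G.compOf {v | v ≠ a ∧ v ≠ b} x ∪ {a, b} := by
  classical
  obtain ⟨u, hu, hau⟩ := exists_adj_compOf hG hab hx
  obtain ⟨t, ht, hbt⟩ := exists_adj_compOf hG hab.symm (x := x) ⟨hx.2, hx.1⟩
  rw [setOf_ne_and_ne_comm] at ht
  obtain ⟨q, hq⟩ := hu.symm.trans ht
  let w : G.Walk a b := .cons hau (q.concat hbt.symm)
  refine ⟨w.toPath, fun v hv => ?_⟩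
  replace hv := w.support_toPath_subset_support hv
  simp only [w, Walk.support_cons, Walk.support_concat, List.mem_cons, List.mem_append,
    List.mem_nil_iff, or_false] at hv
  rcases hv with rfl | hv | rfl
  · simp
  · exact Or.inl (hu.trans ⟨q.takeUntil v hv,
      fun z hz => hq z (q.support_takeUntil_subset_support hv hz)⟩)
  · simp

lemma threeConnPair_of_not_reachIn (hG : NoCutVertex G) (hab : a ≠ b)
    (hx : x ∈ {v | v ≠ a ∧ v ≠ b}) (hy : y ∈ {v | v ≠ a ∧ v ≠ b})
    (hz : z ∈ {v | v ≠ a ∧ v ≠ b}) (hxy : ¬G.ReachIn {v | v ≠ a ∧ v ≠ b} x y)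
    (hxz : ¬G.ReachIn {v | v ≠ a ∧ v ≠ b} x z) (hyz : ¬G.ReachIn {v | v ≠ a ∧ v ≠ b} y z) :
    ThreeConnPair G a b := by
  obtain ⟨p, hp⟩ := exists_path_through_compOf hG hab hx
  obtain ⟨q, hq⟩ := exists_path_through_compOf hG hab hy
  obtain ⟨r, hr⟩ := exists_path_through_compOf hG hab hz
  exact ⟨p, q, r, internallyDisjoint_of_disjoint (disjoint_compOf hxy) hp hq,
    internallyDisjoint_of_disjoint (disjoint_compOf hxz) hp hr,
    internallyDisjoint_of_disjoint (disjoint_compOf hyz) hq hr⟩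

lemma sepPair_and_eq_compOf_of_closed (hG : NoCutVertex G)
    (hno : ∀ a b, SepPair G a b → ¬ThreeConnPair G a b) (hab : a ≠ b) {P : Set V}
    (hPS : P ⊆ {v | v ≠ a ∧ v ≠ b})
    (hP : ∀ u ∈ P, ∀ v ∈ {v | v ≠ a ∧ v ≠ b}, G.Adj u v → v ∈ P) (hx : x ∈ P)
    (hz : z ∈ {v | v ≠ a ∧ v ≠ b}) (hzP : z ∉ P) :
    SepPair G a b ∧ P = G.compOf {v | v ≠ a ∧ v ≠ b} x := by
  have hxz : ¬G.ReachIn {v | v ≠ a ∧ v ≠ b} x z := fun h => hzP (h.mem_of_closed hP hx)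
  have hsep := sepPair_of_not_reachIn hab (hPS hx) hz hxz
  refine ⟨hsep, subset_antisymm (fun w hw => ?_) (compOf_subset_of_closed hP hx)⟩
  by_contra hxw
  exact hno a b hsep (threeConnPair_of_not_reachIn hG hab (hPS hx) (hPS hw) hz hxw hxz
    fun h => hzP (h.mem_of_closed hP hw))

lemma reachIn_left_or_right (hG : NoCutVertex G) (hab : a ≠ b)
    (hv : v ∈ (G.compOf {v | v ≠ a ∧ v ≠ b} x ∪ {a, b}) \ {c}) :
    G.ReachIn ((G.compOf {v | v ≠ a ∧ v ≠ b} x ∪ {a, b}) \ {c}) v a ∨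
      G.ReachIn ((G.compOf {v | v ≠ a ∧ v ≠ b} x ∪ {a, b}) \ {c}) v b := by
  set R := (G.compOf {v | v ≠ a ∧ v ≠ b} x ∪ {a, b}) \ {c}
  by_contra! h
  have hclosed : ∀ u ∈ G.compOf R v, ∀ w ∈ {u | u ≠ c}, G.Adj u w → w ∈ G.compOf R v := by
    intro u hu w hwc huw
    have huC : u ∈ G.compOf {v | v ≠ a ∧ v ≠ b} x := by
      rcases hu.right_mem.1 with huC | hu'
      · exact huC
      · rcases hu' with rfl | rfl
        exacts [absurd hu h.1, absurd hu h.2]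
    exact hu.adj huw ⟨neighborSet_subset_compOf_union huC huw, hwc⟩
  obtain ⟨t, ht, htc⟩ : ∃ t, (t = a ∨ t = b) ∧ t ≠ c := by
    by_cases hac : a = c
    · exact ⟨b, Or.inr rfl, fun hbc => hab (hac.trans hbc.symm)⟩
    · exact ⟨a, Or.inl rfl, hac⟩
  have htR := (hG.reachIn hv.2 htc).mem_of_closed hclosed (mem_compOf_self hv)
  rcases ht with rfl | rfl
  exacts [h.1 htR, h.2 htR]

lemma threeConnPair_of_forall_reachIn_diff (hG : NoCutVertex G) (hab : a ≠ b)
    (hx : x ∈ {v | v ≠ a ∧ v ≠ b}) (hy : y ∈ {v | v ≠ a ∧ v ≠ b})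
    (hxy : ¬G.ReachIn {v | v ≠ a ∧ v ≠ b} x y)
    (h : ∀ c ∈ G.compOf {v | v ≠ a ∧ v ≠ b} x,
      G.ReachIn ((G.compOf {v | v ≠ a ∧ v ≠ b} x ∪ {a, b}) \ {c}) a b) :
    ThreeConnPair G a b := by
  obtain ⟨p, hp⟩ := exists_path_through_compOf hG hab hx
  have hT : ∀ c, ∀ u ∈ (G.compOf {v | v ≠ a ∧ v ≠ b} x ∪ {a, b}) \ {c},
      ∀ w ∈ (G.compOf {v | v ≠ a ∧ v ≠ b} x ∪ {a, b}) \ {c},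
        G.ReachIn ((G.compOf {v | v ≠ a ∧ v ≠ b} x ∪ {a, b}) \ {c}) u w := by
    refine fun c => reachIn_of_forall_reachIn_or (fun v hv => reachIn_left_or_right hG hab hv)
      fun ha hb => ?_
    by_cases hc : c ∈ G.compOf {v | v ≠ a ∧ v ≠ b} x
    · exact h c hc
    refine ⟨p.1, fun v hv => ⟨hp v hv, fun hvc => ?_⟩⟩
    rw [Set.mem_singleton_iff] at hvc
    subst hvc
    rcases hp v hv with hvC | hvab
    · exact hc hvC
    · rcases hvab with rfl | rfl
      exacts [ha.2 rfl, hb.2 rfl]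
  obtain ⟨P₁, P₂, hP₁, hP₂, h₁₂⟩ := exists_internallyDisjoint_paths hT ⟨p.1, hp⟩
  obtain ⟨q, hq⟩ := exists_path_through_compOf hG hab hy
  exact ⟨P₁, P₂, q, h₁₂, internallyDisjoint_of_disjoint (disjoint_compOf hxy) hP₁ hq,
    internallyDisjoint_of_disjoint (disjoint_compOf hxy) hP₂ hq⟩

lemma Set.ncard_eq_two_of_subset_union {α : Type*} {s A B : Set α} (hs : s ⊆ A ∪ B)
    (hAB : Disjoint A B) (hA : (s ∩ A).ncard = 1) (hB : (s ∩ B).ncard = 1) : s.ncard = 2 := by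
  have hsplit : s = s ∩ A ∪ s ∩ B := by
    rw [← Set.inter_union_distrib_left, Set.inter_eq_left.mpr hs]
  rw [hsplit, Set.ncard_union_eq (hAB.mono Set.inter_subset_right Set.inter_subset_right)
    (Set.finite_of_ncard_pos (by omega)) (Set.finite_of_ncard_pos (by omega)), hA, hB]

/-- For a connected `C` not containing `a ≠ b`, this says that `C` is the interior of an `a`–`b`
path whose inner vertices have no other neighbours. -/
def IsChainBetween (G : SimpleGraph V) (a b : V) (C : Set V) : Prop :=
  (∀ v ∈ C, (G.neighborSet v).ncard = 2) ∧ (G.neighborSet a ∩ C).ncard = 1 ∧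
    (G.neighborSet b ∩ C).ncard = 1

lemma mem_of_mem_compOf_diff {C : Set V} (hcut : ¬G.ReachIn ((C ∪ {a, b}) \ {c}) a b)
    (hw : w ∈ G.compOf ((C ∪ {a, b}) \ {c}) a) (hwa : w ≠ a) : w ∈ C := by
  rcases hw.right_mem.1 with hwC | hwab
  · exact hwC
  · rcases hwab with rfl | rfl
    exacts [absurd rfl hwa, absurd hw hcut]

lemma side_chain_of_not_reachIn_diff [Finite V] (hG : NoCutVertex G)
    (hno : ∀ a b, SepPair G a b → ¬ThreeConnPair G a b) (hab : a ≠ b) {C : Set V}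
    (hC : C = G.compOf {v | v ≠ a ∧ v ≠ b} x) (hc : c ∈ C)
    (hcut : ¬G.ReachIn ((C ∪ {a, b}) \ {c}) a b)
    (ih : ∀ x' ∈ {v | v ≠ a ∧ v ≠ c}, SepPair G a c →
      (G.compOf {v | v ≠ a ∧ v ≠ c} x').ncard < C.ncard →
        IsChainBetween G a c (G.compOf {v | v ≠ a ∧ v ≠ c} x')) :
    (G.neighborSet a ∩ C).ncard = 1 ∧
      (G.neighborSet c ∩ G.compOf ((C ∪ {a, b}) \ {c}) a).ncard = 1 ∧
      ∀ v ∈ G.compOf ((C ∪ {a, b}) \ {c}) a, v ≠ a → (G.neighborSet v).ncard = 2 := by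
  subst hC
  set C := G.compOf {v | v ≠ a ∧ v ≠ b} x
  set X := G.compOf ((C ∪ {a, b}) \ {c}) a
  have hcS : c ≠ a ∧ c ≠ b := hc.right_mem
  have haX : a ∈ (C ∪ {a, b}) \ {c} := ⟨Or.inr (Or.inl rfl), fun h => hcS.1 h.symm⟩
  have hXC : X \ {a} ⊆ C := fun w hw => mem_of_mem_compOf_diff hcut hw.1 hw.2
  have hNa : ∀ w ∈ C, G.Adj a w → w ≠ c → w ∈ X :=
    fun w hw haw hwc => (ReachIn.refl haX).adj haw ⟨Or.inl hw, hwc⟩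
  by_cases hX : ∃ x' ∈ X, x' ≠ a
  · obtain ⟨x', hx'X, hx'a⟩ := hX
    have hclosed : ∀ u ∈ X \ {a}, ∀ w ∈ {v | v ≠ a ∧ v ≠ c}, G.Adj u w → w ∈ X \ {a} :=
      fun u hu w hw huw => ⟨hu.1.adj huw
        ⟨neighborSet_subset_compOf_union (hXC hu) huw, hw.2⟩, hw.1⟩
    obtain ⟨hsep, hXeq⟩ := sepPair_and_eq_compOf_of_closed hG hno (Ne.symm hcS.1)
      (fun u hu => ⟨hu.2, hu.1.right_mem.2⟩) hclosed ⟨hx'X, hx'a⟩ (z := b)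
      ⟨hab.symm, Ne.symm hcS.2⟩ fun hb => hcut hb.1
    have hac : ¬G.Adj a c := fun h => hno a c hsep (threeConnPair_of_adj h)
    have hlt : (X \ {a}).ncard < C.ncard :=
      Set.ncard_lt_ncard ⟨hXC, fun h => (h hc).1.right_mem.2 rfl⟩
    have hchain := ih x' ⟨hx'a, hx'X.right_mem.2⟩ hsep (hXeq ▸ hlt)
    rw [← hXeq] at hchain
    obtain ⟨hdeg, haX', hcX'⟩ := hchain
    refine ⟨?_, ?_, fun v hv hva => hdeg v ⟨hv, hva⟩⟩
    · rwa [show G.neighborSet a ∩ C = G.neighborSet a ∩ (X \ {a}) from Set.ext fun w =>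
        ⟨fun ⟨haw, hwC⟩ => ⟨haw, hNa w hwC haw (by rintro rfl; exact hac haw), haw.ne.symm⟩,
          fun ⟨haw, hwX, hwa⟩ => ⟨haw, hXC ⟨hwX, hwa⟩⟩⟩]
    · rwa [← Set.inter_sdiff_assoc, Set.sdiff_singleton_eq_self fun h => hac h.1.symm] at hcX'
  · push Not at hX
    have hsub : ∀ w ∈ G.neighborSet a ∩ C, w = c := fun w ⟨haw, hwC⟩ =>
      by_contra fun hwc => haw.ne (hX w (hNa w hwC haw hwc)).symm
    obtain ⟨u, huC, hau⟩ := exists_adj_compOf hG hab hc.left_mem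
    have hac : G.Adj a c := hsub u ⟨hau, huC⟩ ▸ hau
    have hNaC : G.neighborSet a ∩ C = {c} :=
      Set.eq_singleton_iff_unique_mem.mpr ⟨⟨hac, hc⟩, hsub⟩
    have hNcX : G.neighborSet c ∩ X = {a} :=
      Set.eq_singleton_iff_unique_mem.mpr ⟨⟨hac.symm, ReachIn.refl haX⟩, fun w hw => hX w hw.2⟩
    rw [hNaC, hNcX, Set.ncard_singleton, Set.ncard_singleton]
    exact ⟨rfl, rfl, fun v hv hva => absurd (hX v hv) hva⟩

theorem isChainBetween_compOf [Finite V] (hG : NoCutVertex G)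
    (hno : ∀ a b, SepPair G a b → ¬ThreeConnPair G a b) (hsep : SepPair G a b)
    (hx : x ∈ {v | v ≠ a ∧ v ≠ b}) :
    IsChainBetween G a b (G.compOf {v | v ≠ a ∧ v ≠ b} x) := by
  induction hn : (G.compOf {v | v ≠ a ∧ v ≠ b} x).ncard using Nat.strong_induction_on
    generalizing a b x with
  | _ n ih =>
  set C := G.compOf {v | v ≠ a ∧ v ≠ b} x with hC
  have ih' : ∀ a' c', ∀ x' ∈ {v | v ≠ a' ∧ v ≠ c'}, SepPair G a' c' →
      (G.compOf {v | v ≠ a' ∧ v ≠ c'} x').ncard < C.ncard →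
        IsChainBetween G a' c' (G.compOf {v | v ≠ a' ∧ v ≠ c'} x') :=
    fun a' c' x' hx' hs hlt => ih _ (hn ▸ hlt) hs hx' rfl
  obtain ⟨y, hy, hxy⟩ := hsep.exists_not_reachIn hx
  by_cases hcut : ∀ c ∈ C, G.ReachIn ((C ∪ {a, b}) \ {c}) a b
  · exact absurd (threeConnPair_of_forall_reachIn_diff hG hsep.1 hx hy hxy hcut) (hno a b hsep)
  push Not at hcut
  obtain ⟨c, hc, hcut⟩ := hcut
  obtain ⟨haC, hcX, hX⟩ := side_chain_of_not_reachIn_diff hG hno hsep.1 hC hc hcut (ih' a c)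
  obtain ⟨hbC, hcY, hY⟩ := side_chain_of_not_reachIn_diff hG hno hsep.1.symm
    (hC.trans (by rw [setOf_ne_and_ne_comm])) hc
    (by rw [Set.pair_comm]; exact fun h => hcut h.symm) (ih' b c)
  rw [Set.pair_comm] at hcY hY
  set R := (C ∪ {a, b}) \ {c}
  have hcover : ∀ v ∈ R, v ∈ G.compOf R a ∨ v ∈ G.compOf R b := fun v hv =>
    (reachIn_left_or_right hG hsep.1 hv).imp ReachIn.symm ReachIn.symm
  refine ⟨fun v hv => ?_, haC, hbC⟩
  by_cases hvc : v = c
  · subst hvc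
    exact Set.ncard_eq_two_of_subset_union
      (fun w hw => hcover w ⟨neighborSet_subset_compOf_union hv hw, hw.ne.symm⟩)
      (disjoint_compOf hcut) hcX hcY
  · rcases hcover v ⟨Or.inl hv, hvc⟩ with h | h
    exacts [hX v h hv.right_mem.1, hY v h hv.right_mem.2]

theorem forall_degree_eq_two [Fintype V] [DecidableRel G.Adj] (hG : NoCutVertex G)
    (hno : ∀ a b, SepPair G a b → ¬ThreeConnPair G a b) (hsep : SepPair G a b)
    (hx : x ∈ {v | v ≠ a ∧ v ≠ b}) (v : V) : G.degree v = 2 := by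
  obtain ⟨y, hy, hxy⟩ := hsep.exists_not_reachIn hx
  have hcover : ∀ w ∈ {v | v ≠ a ∧ v ≠ b},
      w ∈ G.compOf {v | v ≠ a ∧ v ≠ b} x ∪ G.compOf {v | v ≠ a ∧ v ≠ b} y := by
    intro w hw
    by_contra h
    rw [Set.mem_union, not_or] at h
    exact hno a b hsep (threeConnPair_of_not_reachIn hG hsep.1 hx hy hw hxy h.1 h.2)
  have hnab : ¬G.Adj a b := fun h => hno a b hsep (threeConnPair_of_adj h)
  have hD := disjoint_compOf hxy
  obtain ⟨hx2, hxa, hxb⟩ := isChainBetween_compOf hG hno hsep hx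
  obtain ⟨hy2, hya, hyb⟩ := isChainBetween_compOf hG hno hsep hy
  rw [degree_eq_ncard_neighborSet]
  by_cases hva : v = a
  · subst hva
    exact Set.ncard_eq_two_of_subset_union
      (fun w hw => hcover w ⟨hw.ne.symm, by rintro rfl; exact hnab hw⟩) hD hxa hya
  by_cases hvb : v = b
  · subst hvb
    exact Set.ncard_eq_two_of_subset_union
      (fun w hw => hcover w ⟨by rintro rfl; exact hnab hw.symm, hw.ne.symm⟩) hD hxb hyb
  rcases hcover v ⟨hva, hvb⟩ with h | h
  exacts [hx2 v h, hy2 v h]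

theorem exists_threeconn_sep_pair_general {V : Type*} [Fintype V] (G : SimpleGraph V)
    [DecidableRel G.Adj]
    (hbi : Biconnected G)
    (hnot3conn : ∃ a b : V, SepPair G a b)
    (hnotcycle : ¬ ∀ v : V, G.degree v = 2) :
    ∃ a b : V, SepPair G a b ∧ ThreeConnPair G a b := by
  by_contra! hno
  obtain ⟨a, b, hsep⟩ := hnot3conn
  obtain ⟨x, -, hx⟩ := Set.exists_mem_notMem_of_ncard_lt_ncard (s := {a, b}) (t := Set.univ)
    (by rw [Set.ncard_pair hsep.1, Set.ncard_univ]; exact hbi.2.1)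
  exact hnotcycle (forall_degree_eq_two hbi.2.2 hno hsep
    ⟨fun h => hx (Or.inl h), fun h => hx (Or.inr h)⟩)

/-- A biconnected planar graph that is neither 3-connected (i.e., it has a separating
pair) nor a cycle (i.e., not 2-regular) has a 3-connected separating pair. -/
theorem exists_threeconn_sep_pair {V : Type*} [Fintype V] (G : SimpleGraph V)
    [DecidableRel G.Adj]
    (hbi : Biconnected G) (hpl : HasPlanarEmbedding G)
    (hnot3conn : ∃ a b : V, SepPair G a b)
    (hnotcycle : ¬ ∀ v : V, G.degree v = 2) :
    ∃ a b : V, SepPair G a b ∧ ThreeConnPair G a b :=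
  exists_threeconn_sep_pair_general G hbi hnot3conn hnotcycle
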